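/- arXiv:1207.2443 — 2 statements merged into one kernel-verified Lean document; each statement's English description precedes it below -/
import Mathlib

section
/- A positive semi-definite symmetric bilinear form Q on ℝ^g lies in Ω via the GL_g(ℤ) action in block form: Q is in the rational closure Ω_g^{rt} if and only if there exists h ∈ GL_g(ℤ) such that h Q hᵗ = diag(Q', 0) for some positive definite quadratic form Q' on ℝ^{g'} with 0 ≤ g' ≤ g. Equivalently, the null space of Q admits a basis of rational vectors. -/
open Matrix

/-- The null space of the real matrix `Q` admits a basis of rational vectors, i.e. it is
spanned by its rational elements. -/
def RationallyDefinedNull {g : ℕ} (Q : Matrix (Fin g) (Fin g) ℝ) : Prop :=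
  Submodule.span ℝ {w : Fin g → ℝ | (∀ i, ∃ q : ℚ, w i = (q : ℝ)) ∧ Q.mulVec w = 0}
    = LinearMap.ker Q.mulVecLin

/-!
If `ker Q` is spanned by rational vectors, then it is spanned over `ℝ` by the lattice
`N = ker Q ∩ ℤ^g`. This lattice is saturated, so by the Smith normal form it is spanned by part
of a basis of `ℤ^g`; listing those basis vectors last gives the rows of `h`. For a positive
semidefinite `Q` and any basis `b` of `ℝ^g`, the Gram matrix `(b p ⬝ Q b q)` has the shape
`diag(Q', 0)` with `Q'` positive definite exactly when the last basis vectors span `ker Q`: the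
last rows and columns vanish because they pair with the radical, and `Q'` is definite because
the first basis vectors are independent modulo `ker Q`. Conversely, the last rows of such an
`h` are integer vectors spanning `ker Q`.
-/

open Submodule Set

namespace Matrix

variable {m n R : Type*} [Fintype n] [CommSemiring R]

theorem dotProduct_mul_mul_transpose_mulVec [Fintype m] (B : Matrix m n R) (Q : Matrix n n R)
    (x : m → R) : x ⬝ᵥ (B * Q * Bᵀ) *ᵥ x = (x ᵥ* B) ⬝ᵥ Q *ᵥ (x ᵥ* B) := by
  rw [← mulVec_mulVec, ← mulVec_mulVec, dotProduct_mulVec, mulVec_transpose]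

theorem mul_mul_transpose_apply (B : Matrix m n R) (Q : Matrix n n R) (i j : m) :
    (B * Q * Bᵀ) i j = B i ⬝ᵥ Q *ᵥ B j := by
  simp only [mul_apply, dotProduct, mulVec, transpose_apply, Finset.mul_sum, Finset.sum_mul]
  rw [Finset.sum_comm]
  simp only [mul_assoc]

theorem span_range_le_ker_mulVecLin_iff {ι κ : Type*} (b : Module.Basis ι R (n → R))
    (Q : Matrix n n R) (v : κ → n → R) :
    span R (range v) ≤ LinearMap.ker Q.mulVecLin ↔ ∀ p j, b p ⬝ᵥ Q *ᵥ v j = 0 := by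
  classical
  simp only [span_le, range_subset_iff, SetLike.mem_coe, LinearMap.mem_ker, mulVecLin_apply]
  refine ⟨fun h p j => by rw [h j, dotProduct_zero], fun h j => ?_⟩
  exact (dotProductEquiv R n).map_eq_zero_iff.mp
    (b.ext fun p => by simpa [dotProduct_comm] using h p j)

noncomputable def rowBasis {K : Type*} [Field K] [DecidableEq n] (A : Matrix n n K)
    (hA : IsUnit A) : Module.Basis n K (n → K) :=
  basisOfLinearIndependentOfCardEqFinrank' A.row (linearIndependent_rows_of_isUnit hA)
    (Module.finrank_fintype_fun_eq_card K).symm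

@[simp]
theorem coe_rowBasis {K : Type*} [Field K] [DecidableEq n] (A : Matrix n n K) (hA : IsUnit A) :
    ⇑(A.rowBasis hA) = A.row :=
  coe_basisOfLinearIndependentOfCardEqFinrank' ..

end Matrix

theorem Module.Basis.isUnit_det_of {n R : Type*} [Fintype n] [DecidableEq n] [CommRing R]
    (b : Module.Basis n R (n → R)) : IsUnit (of b).det := by
  have : of b = ((Pi.basisFun R n).toMatrix b)ᵀ := by
    ext i j
    simp [Module.Basis.toMatrix_apply]
  rw [this, det_transpose, ← Module.Basis.det_apply]
  exact (Pi.basisFun R n).isUnit_det b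

theorem Module.Basis.span_range_inr_eq_iff {ι κ R M : Type*} [Ring R] [AddCommGroup M]
    [Module R M] (b : Module.Basis (ι ⊕ κ) R M) (K : Submodule R M) :
    span R (range (b ∘ Sum.inr)) = K ↔
      span R (range (b ∘ Sum.inr)) ≤ K ∧ Disjoint (span R (range (b ∘ Sum.inl))) K := by
  refine ⟨?_, fun ⟨hle, hdisj⟩ => le_antisymm hle (le_of_eq ?_)⟩
  · rintro rfl
    exact ⟨le_rfl, (linearIndependent_sum.mp b.linearIndependent).2.2⟩
  · have htop : span R (range (b ∘ Sum.inr)) ⊔ span R (range (b ∘ Sum.inl)) = ⊤ := by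
      rw [← span_union, union_comm, ← Sum.elim_range, Sum.elim_comp_inl_inr, b.span_eq]
    calc K = (span R (range (b ∘ Sum.inr)) ⊔ span R (range (b ∘ Sum.inl))) ⊓ K := by
          rw [htop, top_inf_eq]
      _ = span R (range (b ∘ Sum.inr)) := by
          rw [sup_inf_assoc_of_le _ hle, hdisj.eq_bot, sup_bot_eq]

namespace Matrix.PosSemidef

variable {m n ι κ : Type*} [Fintype m] [Fintype n] [Fintype ι] {Q : Matrix n n ℝ}

theorem posDef_mul_mul_transpose_iff (hQ : Q.PosSemidef) (B : Matrix m n ℝ) :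
    (B * Q * Bᵀ).PosDef ↔ LinearIndependent ℝ fun i => Q *ᵥ B i := by
  have hcomb : ∀ x : m → ℝ, ∑ i, x i • Q *ᵥ B i = Q *ᵥ (x ᵥ* B) := fun x => by
    simp only [vecMul_eq_sum, mulVec_sum, mulVec_smul]
  rw [Fintype.linearIndependent_iff]
  simp only [hcomb]
  constructor
  · intro hpos x hx
    by_contra! hne
    have := hpos.dotProduct_mulVec_pos (x := x) (funext_iff.not.mpr (by simpa using hne))
    rw [star_trivial, dotProduct_mul_mul_transpose_mulVec, hx, dotProduct_zero] at this
    exact this.false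
  · intro hli
    refine PosDef.of_dotProduct_mulVec_pos ?_ fun x hx => ?_
    · simpa [conjTranspose_eq_transpose_of_trivial] using
        (hQ.mul_mul_conjTranspose_same B).isHermitian
    · rw [star_trivial, dotProduct_mul_mul_transpose_mulVec]
      refine (hQ.dotProduct_mulVec_nonneg _).lt_of_ne' fun h0 => hx (funext (hli x ?_))
      exact (hQ.dotProduct_mulVec_zero_iff _).mp (by rwa [star_trivial])

theorem disjoint_span_ker_iff (hQ : Q.PosSemidef) {v : ι → n → ℝ}
    (hv : LinearIndependent ℝ v) :
    Disjoint (span ℝ (range v)) (LinearMap.ker Q.mulVecLin) ↔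
      (of v * Q * (of v)ᵀ).PosDef := by
  rw [hQ.posDef_mul_mul_transpose_iff]
  change _ ↔ LinearIndependent ℝ (Q.mulVecLin ∘ v)
  exact ⟨hv.map, Submodule.range_ker_disjoint⟩

theorem exists_posDef_fromBlocks_iff (hQ : Q.PosSemidef)
    (b : Module.Basis (ι ⊕ κ) ℝ (n → ℝ)) :
    (∃ Q' : Matrix ι ι ℝ, Q'.PosDef ∧ of b * Q * (of b)ᵀ = fromBlocks Q' 0 0 0) ↔
      span ℝ (range (b ∘ Sum.inr)) = LinearMap.ker Q.mulVecLin := by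
  have hli := (linearIndependent_sum.mp b.linearIndependent).1
  rw [b.span_range_inr_eq_iff, span_range_le_ker_mulVecLin_iff b,
    hQ.disjoint_span_ker_iff hli]
  have hsymm : ∀ p q, b p ⬝ᵥ Q *ᵥ b q = b q ⬝ᵥ Q *ᵥ b p := fun p q => by
    rw [dotProduct_mulVec, ← mulVec_transpose, isHermitian_iff_isSymm.mp hQ.isHermitian,
      dotProduct_comm]
  constructor
  · rintro ⟨Q', hQ', hG⟩
    have hent : ∀ p q, b p ⬝ᵥ Q *ᵥ b q = fromBlocks Q' 0 0 0 p q := fun p q => by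
      rw [← hG, mul_mul_transpose_apply]
      rfl
    refine ⟨fun p j => by rcases p with i | i <;> simp [hent], ?_⟩
    convert hQ' using 1
    ext i i'
    rw [mul_mul_transpose_apply, ← fromBlocks_apply₁₁ Q' 0 0 0, ← hent]
    rfl
  · rintro ⟨hcol, hpd⟩
    refine ⟨_, hpd, ?_⟩
    ext (i | j) (i' | j')
    · rw [mul_mul_transpose_apply, fromBlocks_apply₁₁, mul_mul_transpose_apply]
      rfl
    · exact (mul_mul_transpose_apply _ _ _ _).trans (hcol _ _)
    · exact (mul_mul_transpose_apply _ _ _ _).trans ((hsymm _ _).trans (hcol _ _))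
    · exact (mul_mul_transpose_apply _ _ _ _).trans (hcol _ _)

theorem exists_posDef_submatrix_fromBlocks_iff [DecidableEq n] (hQ : Q.PosSemidef)
    {A : Matrix n n ℝ} (hA : IsUnit A) (e : ι ⊕ κ ≃ n) :
    (∃ Q' : Matrix ι ι ℝ, Q'.PosDef ∧
        A * Q * Aᵀ = (fromBlocks Q' 0 0 0).submatrix e.symm e.symm) ↔
      span ℝ (range fun j => A (e (Sum.inr j))) = LinearMap.ker Q.mulVecLin := by
  have key := hQ.exists_posDef_fromBlocks_iff ((A.rowBasis hA).reindex e.symm)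
  have hb : ⇑((A.rowBasis hA).reindex e.symm) = fun p => A (e p) := by
    funext p
    simp only [Module.Basis.reindex_apply, Equiv.symm_symm, coe_rowBasis, row]
  have hG : of (fun p => A (e p)) * Q * (of fun p => A (e p))ᵀ =
      (A * Q * Aᵀ).submatrix e e := by
    ext p q
    simp only [mul_mul_transpose_apply, submatrix_apply]
    rfl
  have hsub : ∀ M D : Matrix _ _ ℝ, M = D.submatrix e.symm e.symm ↔ M.submatrix e e = D :=
    fun M D => ⟨by rintro rfl; simp, by rintro rfl; simp⟩
  rw [hb, hG] at key
  simpa only [hsub, Function.comp_def] using key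

end Matrix.PosSemidef

section IntegerLattice

variable {n : Type*}

theorem exists_intCast_eq_smul_of_rational [Finite n] {w : n → ℝ}
    (hw : ∀ i, ∃ q : ℚ, w i = q) : ∃ d : ℤ, d ≠ 0 ∧ ∃ z : n → ℤ, Int.cast ∘ z = (d : ℝ) • w := by
  choose q hq using hw
  obtain ⟨⟨d, hd⟩, hint⟩ :=
    IsLocalization.exist_integer_multiples_of_finite (nonZeroDivisors ℤ) q
  choose z hz using hint
  refine ⟨d, nonZeroDivisors.ne_zero hd, z, funext fun i => ?_⟩
  have := congrArg (Rat.cast : ℚ → ℝ) (hz i)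
  simp only [algebraMap_int_eq, eq_intCast, Rat.cast_intCast, zsmul_eq_mul, Rat.cast_mul] at this
  simp [this, hq]

variable (n) in
noncomputable def intCastLinearMap : (n → ℤ) →ₗ[ℤ] (n → ℝ) :=
  (Int.castAddHom ℝ).toIntLinearMap.compLeft n

@[simp]
theorem intCastLinearMap_apply (v : n → ℤ) : intCastLinearMap n v = Int.cast ∘ v := rfl

theorem exists_basis_span_intCast_image_eq [Finite n] (W : Submodule ℝ (n → ℝ))
    (hW : W ≤ span ℝ {w | (∀ i, ∃ q : ℚ, w i = (q : ℝ)) ∧ w ∈ W}) :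
    ∃ (b : Module.Basis n ℤ (n → ℤ)) (S : Set n),
      span ℝ ((intCastLinearMap n ∘ b) '' S) = W := by
  classical
  set N := (W.restrictScalars ℤ).comap (intCastLinearMap n)
  obtain ⟨k, bM, bN, f, a, hsnf⟩ := N.smithNormalForm (Pi.basisFun ℤ n)
  -- `N` is saturated: `a i • bM (f i) ∈ N` with `a i ≠ 0` forces `bM (f i) ∈ N`.
  have hmem : ∀ i, intCastLinearMap n (bM (f i)) ∈ W := fun i => by
    have ha : (a i : ℝ) ≠ 0 := Int.cast_ne_zero.mpr fun h0 =>
      bN.ne_zero i (Subtype.ext (by rw [hsnf, h0, zero_smul, ZeroMemClass.coe_zero]))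
    have h1 : intCastLinearMap n (bN i) ∈ W := (bN i).2
    rwa [hsnf, map_smul, ← Int.cast_smul_eq_zsmul ℝ, W.smul_mem_iff ha] at h1
  have hN : N ≤ span ℤ (bM '' range f) := fun z hz => by
    change ((⟨z, hz⟩ : N) : n → ℤ) ∈ _
    rw [← bN.sum_repr ⟨z, hz⟩, AddSubmonoidClass.coe_finsetSum]
    refine sum_mem fun i _ => ?_
    rw [SetLike.val_smul, hsnf, smul_smul]
    exact smul_mem _ _ (subset_span ⟨_, ⟨i, rfl⟩, rfl⟩)
  refine ⟨bM, range f, le_antisymm ?_ (hW.trans (span_le.mpr ?_))⟩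
  · exact span_le.mpr <| by rintro _ ⟨_, ⟨i, rfl⟩, rfl⟩; exact hmem i
  · rintro w ⟨hrat, hwW⟩
    obtain ⟨d, hd, z, hz⟩ := exists_intCast_eq_smul_of_rational hrat
    have hzN : z ∈ N := show intCastLinearMap n z ∈ W by
      rw [intCastLinearMap_apply, hz]
      exact W.smul_mem _ hwW
    have hz' : intCastLinearMap n z ∈ span ℝ ((intCastLinearMap n ∘ bM) '' range f) := by
      have := mem_map_of_mem (f := intCastLinearMap n) (hN hzN)
      rw [map_span, ← image_comp] at this
      exact span_le_restrictScalars ℤ ℝ _ this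
    have hw : w = (d : ℝ)⁻¹ • intCastLinearMap n z := by
      rw [intCastLinearMap_apply, hz, inv_smul_smul₀ (Int.cast_ne_zero.mpr hd)]
    rw [SetLike.mem_coe, hw]
    exact smul_mem _ _ hz'

end IntegerLattice

theorem Fin.exists_sumEquiv_range_inr_eq {g : ℕ} (S : Set (Fin g)) :
    ∃ (g' : ℕ) (_ : g' ≤ g) (e : Fin g' ⊕ Fin (g - g') ≃ Fin g), range (e ∘ Sum.inr) = S := by
  classical
  have hcompl := Fintype.card_compl_set S
  have hS := set_fintype_card_le_univ S
  simp only [Fintype.card_fin] at hcompl hS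
  refine ⟨Fintype.card ↥Sᶜ, by omega, (Equiv.sumComm _ _).trans
    ((Equiv.sumCongr (Fintype.equivFinOfCardEq (by omega)).symm
      (Fintype.equivFin ↥Sᶜ).symm).trans (Equiv.Set.sumCompl S)), ?_⟩
  ext x
  simp only [Function.comp_apply, mem_range, Equiv.trans_apply, Equiv.sumComm_apply,
    Sum.swap_inr, Equiv.sumCongr_apply, Sum.map_inl, Equiv.Set.sumCompl_apply_inl]
  exact ⟨fun ⟨y, hy⟩ => hy ▸ Subtype.prop _,
    fun hx => ⟨_, congrArg Subtype.val ((Fintype.equivFinOfCardEq _).symm_apply_apply ⟨x, hx⟩)⟩⟩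

theorem stmt3_general {g : ℕ} (Q : Matrix (Fin g) (Fin g) ℝ)
    (hQ : Q.PosSemidef) :
    RationallyDefinedNull Q ↔
      ∃ h : Matrix (Fin g) (Fin g) ℤ, IsUnit h.det ∧
        ∃ (g' : ℕ) (hle : g' ≤ g) (Q' : Matrix (Fin g') (Fin g') ℝ), Q'.PosDef ∧
          (h.map (Int.cast : ℤ → ℝ)) * Q * (h.map (Int.cast : ℤ → ℝ))ᵀ
            = (Matrix.fromBlocks Q' 0 0 (0 : Matrix (Fin (g - g')) (Fin (g - g')) ℝ)).submatrix
                (finSumFinEquiv.trans (finCongr (Nat.add_sub_cancel' hle))).symm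
                (finSumFinEquiv.trans (finCongr (Nat.add_sub_cancel' hle))).symm := by
  have hcast : ∀ {h : Matrix (Fin g) (Fin g) ℤ}, IsUnit h.det →
      IsUnit (h.map (Int.cast : ℤ → ℝ)) := fun hdet =>
    ((isUnit_iff_isUnit_det _).mpr hdet).map (Int.castRingHom ℝ).mapMatrix
  constructor
  · intro hrat
    obtain ⟨b, S, hbS⟩ := exists_basis_span_intCast_image_eq _ hrat.ge
    obtain ⟨g', hle, e, he⟩ := Fin.exists_sumEquiv_range_inr_eq S
    set ψ := finSumFinEquiv.trans (finCongr (Nat.add_sub_cancel' hle))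
    have hdet := ((b.reindex e.symm).reindex ψ).isUnit_det_of
    refine ⟨_, hdet, g', hle, (Matrix.PosSemidef.exists_posDef_submatrix_fromBlocks_iff hQ
      (hcast hdet) ψ).mpr ?_⟩
    rw [← hbS, ← he, ← range_comp]
    congr 2
    ext j i
    simp
  · rintro ⟨h, hdet, g', hle, Q', hQ', heq⟩
    have hspan := (Matrix.PosSemidef.exists_posDef_submatrix_fromBlocks_iff hQ (hcast hdet) _).mp
      ⟨Q', hQ', heq⟩
    refine le_antisymm (span_le.mpr fun w hw => hw.2) ?_
    rw [← hspan]
    refine span_mono ?_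
    rintro _ ⟨j, rfl⟩
    exact ⟨fun i => ⟨_, (Rat.cast_intCast (h _ i)).symm⟩, (span_le.mp hspan.le) ⟨j, rfl⟩⟩

/-- A positive semi-definite symmetric bilinear form `Q` on `ℝ^g` lies in the rational
closure `Ω_g^{rt}` (its null space admits a basis of rational vectors) if and only if
there exists `h ∈ GL_g(ℤ)` such that `h Q hᵗ = diag(Q', 0)` for some positive definite
quadratic form `Q'` on `ℝ^{g'}` with `0 ≤ g' ≤ g`. -/
theorem stmt3 {g : ℕ} (Q : Matrix (Fin g) (Fin g) ℝ) (hsym : Q.IsSymm)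
    (hQ : Q.PosSemidef) :
    RationallyDefinedNull Q ↔
      ∃ h : Matrix (Fin g) (Fin g) ℤ, IsUnit h.det ∧
        ∃ (g' : ℕ) (hle : g' ≤ g) (Q' : Matrix (Fin g') (Fin g') ℝ), Q'.PosDef ∧
          (h.map (Int.cast : ℤ → ℝ)) * Q * (h.map (Int.cast : ℤ → ℝ))ᵀ
            = (Matrix.fromBlocks Q' 0 0 (0 : Matrix (Fin (g - g')) (Fin (g - g')) ℝ)).submatrix
                (finSumFinEquiv.trans (finCongr (Nat.add_sub_cancel' hle))).symm
                (finSumFinEquiv.trans (finCongr (Nat.add_sub_cancel' hle))).symm :=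
  stmt3_general Q hQ
end

section
/- If Σ is an admissible decomposition of Ω_g^{rt} (a fan of rational polyhedral cones with support Ω_g^{rt} permuted by GL_g(ℤ)), then Ω_g^{rt} \ Ω_g is a union of cones of Σ; that is, every cone of Σ whose relative interior meets the boundary Ω_g^{rt} \ Ω_g is entirely contained in that boundary. -/
open Matrix

/-!
A strictly positive combination of the generators that is not positive definite has an isotropic
vector `x ≠ 0`. Its quadratic form at `x` is a sum of nonnegative terms, one per generator, so `x`
is isotropic for every generator, hence for every element of the cone, none of which can then be
positive definite.
-/

namespace Matrix

variable {n ι R : Type*} [Fintype ι]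

theorem posSemidef_sum_smul {A : ι → Matrix n n ℝ} (hA : ∀ i, (A i).PosSemidef) {c : ι → ℝ}
    (hc : ∀ i, 0 ≤ c i) : (∑ i, c i • A i).PosSemidef :=
  posSemidef_sum _ fun i _ => (hA i).smul (hc i)

variable [Fintype n]

theorem PosSemidef.exists_dotProduct_mulVec_eq_zero_of_not_posDef [Ring R] [PartialOrder R]
    [StarRing R] {M : Matrix n n R} (hM : M.PosSemidef) (hM' : ¬ M.PosDef) :
    ∃ x ≠ 0, star x ⬝ᵥ (M *ᵥ x) = 0 := by
  by_contra! h
  exact hM' <| posDef_iff_dotProduct_mulVec.mpr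
    ⟨hM.isHermitian, fun x hx => (hM.dotProduct_mulVec_nonneg x).lt_of_ne' (h x hx)⟩

variable {A : ι → Matrix n n ℝ}

theorem dotProduct_sum_smul_mulVec (c : ι → ℝ) (x : n → ℝ) :
    star x ⬝ᵥ ((∑ i, c i • A i) *ᵥ x) = ∑ i, c i * (star x ⬝ᵥ (A i *ᵥ x)) := by
  simp only [sum_mulVec, dotProduct_sum, smul_mulVec, dotProduct_smul, smul_eq_mul]

theorem exists_forall_dotProduct_mulVec_eq_zero_of_not_posDef_sum_smul
    (hA : ∀ i, (A i).PosSemidef) {c : ι → ℝ} (hc : ∀ i, 0 < c i)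
    (hnot : ¬ (∑ i, c i • A i).PosDef) :
    ∃ x ≠ 0, ∀ i, star x ⬝ᵥ (A i *ᵥ x) = 0 := by
  obtain ⟨x, hx, hzero⟩ := (posSemidef_sum_smul hA fun i => (hc i).le)
    |>.exists_dotProduct_mulVec_eq_zero_of_not_posDef hnot
  rw [dotProduct_sum_smul_mulVec, Finset.sum_eq_zero_iff_of_nonneg fun i _ =>
    mul_nonneg (hc i).le ((hA i).dotProduct_mulVec_nonneg x)] at hzero
  exact ⟨x, hx, fun i => (mul_eq_zero.mp (hzero i (Finset.mem_univ i))).resolve_left (hc i).ne'⟩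

theorem not_posDef_sum_smul_of_dotProduct_mulVec_eq_zero {x : n → ℝ} (hx : x ≠ 0)
    (hzero : ∀ i, star x ⬝ᵥ (A i *ᵥ x) = 0) (c : ι → ℝ) : ¬ (∑ i, c i • A i).PosDef := by
  intro hpos
  have := hpos.dotProduct_mulVec_pos hx
  simp only [dotProduct_sum_smul_mulVec, hzero, mul_zero, Finset.sum_const_zero,
    lt_self_iff_false] at this

end Matrix

theorem stmt7_general {g k : ℕ} (A : Fin k → Matrix (Fin g) (Fin g) ℝ)
    (hA : ∀ i, (A i).PosSemidef)
    (lam : Fin k → ℝ) (hlam : ∀ i, 0 < lam i)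
    (hbd : ¬ (∑ i, lam i • A i).PosDef) :
    ∀ B ∈ {B : Matrix (Fin g) (Fin g) ℝ |
        ∃ c : Fin k → ℝ, (∀ i, 0 ≤ c i) ∧ B = ∑ i, c i • A i},
      B.PosSemidef ∧ ¬ B.PosDef := by
  obtain ⟨x, hx, hzero⟩ :=
    exists_forall_dotProduct_mulVec_eq_zero_of_not_posDef_sum_smul hA hlam hbd
  rintro B ⟨c, hc, rfl⟩
  exact ⟨posSemidef_sum_smul hA hc, not_posDef_sum_smul_of_dotProduct_mulVec_eq_zero hx hzero c⟩

/-- Let `σ` be a rational polyhedral cone of `Ω_g^{rt}`, generated by finitely many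
positive semi-definite matrices `A₁,…,A_k` with rational entries (as in an admissible
decomposition `Σ` of `Ω_g^{rt}`).  If some point of the relative interior of `σ`
(i.e. some strictly positive combination of the generators) lies in the boundary
`Ω_g^{rt} \ Ω_g` (i.e. is not positive definite), then the whole cone `σ` is contained
in the boundary: every element of `σ` is positive semi-definite but not positive
definite. -/
theorem stmt7 {g k : ℕ} (A : Fin k → Matrix (Fin g) (Fin g) ℝ)
    (hA : ∀ i, (A i).PosSemidef)
    (hrat : ∀ i p q, ∃ r : ℚ, A i p q = (r : ℝ))
    (lam : Fin k → ℝ) (hlam : ∀ i, 0 < lam i)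
    (hbd : ¬ (∑ i, lam i • A i).PosDef) :
    ∀ B ∈ {B : Matrix (Fin g) (Fin g) ℝ |
        ∃ c : Fin k → ℝ, (∀ i, 0 ≤ c i) ∧ B = ∑ i, c i • A i},
      B.PosSemidef ∧ ¬ B.PosDef :=
  stmt7_general A hA lam hlam hbd
end
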